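/- Let m ≥ 1 be an integer and set W(m) = (−A⁶−A⁻⁶)·N(1) + (−A⁴−A⁻⁴+2)·P(m+1)·P̄(m) in ℤ[A, A⁻¹]. Then h(W(m)) = 4m+15 and ℓ(W(m)) = −4m−13, so that span(W(m)) = 8m+28; in particular span(W(m)) > 16. -/

import Mathlib

open LaurentPolynomial Finset

/-- The coefficient of `A^k` in the Laurent polynomial `y ∈ ℤ[A,A⁻¹]`. -/
noncomputable def coeffA (y : LaurentPolynomial ℤ) (k : ℤ) : ℤ := y.coeff k

/-- `y` has highest exponent `d`, with coefficient `c` (nonzero) on `A^d`. -/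
def HiCoeff (y : LaurentPolynomial ℤ) (d c : ℤ) : Prop :=
  coeffA y d = c ∧ c ≠ 0 ∧ ∀ k, d < k → coeffA y k = 0

/-- `y` has lowest exponent `d`, with coefficient `c` (nonzero) on `A^d`. -/
def LoCoeff (y : LaurentPolynomial ℤ) (d c : ℤ) : Prop :=
  coeffA y d = c ∧ c ≠ 0 ∧ ∀ k, k < d → coeffA y k = 0

/-- `y` has highest exponent `d`: `h(y) = d`. -/
def IsHi (y : LaurentPolynomial ℤ) (d : ℤ) : Prop :=
  coeffA y d ≠ 0 ∧ ∀ k, d < k → coeffA y k = 0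

/-- `y` has lowest exponent `d`: `ℓ(y) = d`. -/
def IsLo (y : LaurentPolynomial ℤ) (d : ℤ) : Prop :=
  coeffA y d ≠ 0 ∧ ∀ k, k < d → coeffA y k = 0

/-- P(n) = A^{−n−6} + (A⁴+A⁻⁴)·Σ_{k=1}^{n} (−1)^k A^{4k−n−2} -/
noncomputable def P (n : ℕ) : LaurentPolynomial ℤ :=
  T (-(n:ℤ) - 6) +
    (T 4 + T (-4)) * ∑ k ∈ Finset.Icc 1 n, (-1 : LaurentPolynomial ℤ)^k * T (4*(k:ℤ) - n - 2)

/-- P̄(n) = A^{n+6} + (A⁴+A⁻⁴)·Σ_{k=1}^{n} (−1)^k A^{−4k+n+2} -/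
noncomputable def Pbar (n : ℕ) : LaurentPolynomial ℤ :=
  T ((n:ℤ) + 6) +
    (T 4 + T (-4)) * ∑ k ∈ Finset.Icc 1 n, (-1 : LaurentPolynomial ℤ)^k * T (-4*(k:ℤ) + n + 2)

/-- Q(j) = −A^{2−j} + Σ_{k=0}^{j} (−1)^{k+1} A^{4k−j−2} -/
noncomputable def Q (j : ℕ) : LaurentPolynomial ℤ :=
  -T (2 - (j:ℤ)) + ∑ k ∈ Finset.range (j+1), (-1 : LaurentPolynomial ℤ)^(k+1) * T (4*(k:ℤ) - j - 2)

/-- N(j) = (−A⁶−A⁻⁶)·(−A³)^j + (−A⁴−A⁻⁴+2)·Q(j) -/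
noncomputable def N (j : ℕ) : LaurentPolynomial ℤ :=
  (-T 6 - T (-6)) * (-T 3)^j + (-T 4 - T (-4) + 2) * Q j

/-- R(m) = A^{−m−5} + (A⁴+A⁻⁴)·Σ_{k=1}^{m−1} (−1)^k A^{4k−m−1} -/
noncomputable def Rm (m : ℕ) : LaurentPolynomial ℤ :=
  T (-(m:ℤ) - 5) +
    (T 4 + T (-4)) * ∑ k ∈ Finset.Icc 1 (m-1), (-1 : LaurentPolynomial ℤ)^k * T (4*(k:ℤ) - m - 1)

/-!
The top monomial of `W(m)` comes from `(-A⁴-A⁻⁴+2)·P(m+1)·P̄(m)`: leading exponents add under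
multiplication, giving `4 + (3(m+1)+2) + (m+6) = 4m+15`, while `(-A⁶-A⁻⁶)·N(1)` has degree
`6 + 9 = 15 < 4m+15`. The bar involution `A ↦ A⁻¹` fixes `A⁴+A⁻⁴` and `A⁶+A⁻⁶` and swaps `P` and
`P̄`, so `ℓ(W(m)) = -h(W̄(m))` with `W̄(m) = (-A⁶-A⁻⁶)·N̄(1) + (-A⁴-A⁻⁴+2)·P̄(m+1)·P(m)`,
whose top monomial is found in the same way.
-/

@[simp] lemma coeffA_T (n k : ℤ) : coeffA (T n) k = if n = k then 1 else 0 := T_apply k n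

@[simp] lemma coeffA_two (k : ℤ) : coeffA 2 k = if k = 0 then 2 else 0 := by
  rw [coeffA, ← map_ofNat C 2, C_apply]

@[simp] lemma coeffA_add (f g : LaurentPolynomial ℤ) (k : ℤ) :
    coeffA (f + g) k = coeffA f k + coeffA g k := rfl

@[simp] lemma coeffA_sub (f g : LaurentPolynomial ℤ) (k : ℤ) :
    coeffA (f - g) k = coeffA f k - coeffA g k := rfl

@[simp] lemma coeffA_neg (f : LaurentPolynomial ℤ) (k : ℤ) : coeffA (-f) k = -coeffA f k := rfl

@[simp] lemma coeffA_sum {ι : Type*} (s : Finset ι) (f : ι → LaurentPolynomial ℤ) (k : ℤ) :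
    coeffA (∑ i ∈ s, f i) k = ∑ i ∈ s, coeffA (f i) k := by
  simp [coeffA, AddMonoidAlgebra.coeff_sum]

@[simp] lemma coeffA_neg_one_pow_mul (j : ℕ) (f : LaurentPolynomial ℤ) (k : ℤ) :
    coeffA ((-1) ^ j * f) k = (-1) ^ j * coeffA f k := by
  rcases Nat.even_or_odd j with h | h <;> simp [h.neg_one_pow, coeffA]

@[simp] lemma coeffA_invert (f : LaurentPolynomial ℤ) (k : ℤ) :
    coeffA (invert f) k = coeffA f (-k) :=
  invert_apply f k

section

variable {f g y z : LaurentPolynomial ℤ} {d e c c' : ℤ}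

lemma coeffA_mul_eq_zero_of_vanish_above
    (hf : ∀ k, d < k → coeffA f k = 0) (hg : ∀ k, e < k → coeffA g k = 0)
    (k : ℤ) (hk : d + e < k) : coeffA (f * g) k = 0 := by
  classical
  rw [coeffA, AddMonoidAlgebra.coeff_mul]
  refine Finset.sum_eq_zero fun a ha => Finset.sum_eq_zero fun b hb => if_neg fun hab => ?_
  rw [Finsupp.mem_support_iff] at ha hb
  rcases lt_or_ge d a with had | had
  · exact ha (hf a had)
  · exact hb (hg b (by omega))

lemma coeffA_mul_add_of_vanish_above
    (hf : ∀ k, d < k → coeffA f k = 0) (hg : ∀ k, e < k → coeffA g k = 0) :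
    coeffA (f * g) (d + e) = coeffA f d * coeffA g e := by
  classical
  have hd : ∀ a b, a + b = d + e → coeffA f a * coeffA g b ≠ 0 → a = d := by
    intro a b hab hne
    have ha : a ≤ d := not_lt.1 fun h => hne (by rw [hf a h, zero_mul])
    have hb : b ≤ e := not_lt.1 fun h => hne (by rw [hg b h, mul_zero])
    omega
  rw [coeffA, AddMonoidAlgebra.coeff_mul, Finsupp.sum, Finset.sum_eq_single d, Finsupp.sum,
    Finset.sum_eq_single e, if_pos rfl]
  · rfl
  · exact fun b _ hb => if_neg fun h => hb (by omega)
  · simp +contextual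
  · intro a _ ha
    refine Finset.sum_eq_zero fun b _ => ite_eq_right_iff.2 fun hab => ?_
    by_contra hne
    exact ha (hd a b hab hne)
  · simp +contextual

lemma HiCoeff.mul (hf : HiCoeff f d c) (hg : HiCoeff g e c') : HiCoeff (f * g) (d + e) (c * c') :=
  ⟨by rw [coeffA_mul_add_of_vanish_above hf.2.2 hg.2.2, hf.1, hg.1], mul_ne_zero hf.2.1 hg.2.1,
    coeffA_mul_eq_zero_of_vanish_above hf.2.2 hg.2.2⟩

lemma HiCoeff.add_left (hz : HiCoeff z d c) (hy : ∀ k, e < k → coeffA y k = 0) (hed : e < d) :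
    HiCoeff (y + z) d c := by
  obtain ⟨hzd, hc, hz⟩ := hz
  refine ⟨?_, hc, fun k hk => ?_⟩
  · rw [coeffA_add, hy d hed, hzd, zero_add]
  · rw [coeffA_add, hy k (by omega), hz k hk, zero_add]

lemma HiCoeff.add_right (hy : HiCoeff y d c) (hz : ∀ k, e < k → coeffA z k = 0) (hed : e < d) :
    HiCoeff (y + z) d c :=
  add_comm z y ▸ hy.add_left hz hed

lemma HiCoeff.isHi (h : HiCoeff y d c) : IsHi y d :=
  ⟨h.1 ▸ h.2.1, h.2.2⟩

lemma IsHi.isLo_of_invert (h : IsHi (invert y) (-d)) : IsLo y d := by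
  refine ⟨by simpa using h.1, fun k hk => ?_⟩
  simpa using h.2 (-k) (by omega)

end

lemma hiCoeff_T (n : ℤ) : HiCoeff (T n) n 1 :=
  ⟨by simp, one_ne_zero, fun k hk => by simp [hk.ne]⟩

lemma hiCoeff_neg_T (n : ℤ) : HiCoeff (-T n) n (-1) :=
  ⟨by simp, by norm_num, fun k hk => by simp [hk.ne]⟩

lemma hiCoeff_T_add_T_neg {n : ℤ} (hn : 0 < n) : HiCoeff (T n + T (-n)) n 1 :=
  ⟨by simp; omega, one_ne_zero, fun k hk => by simp; omega⟩

lemma hiCoeff_neg_T_sub_T_neg {n : ℤ} (hn : 0 < n) : HiCoeff (-T n - T (-n)) n (-1) :=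
  ⟨by simp; omega, by norm_num, fun k hk => by simp; omega⟩

lemma hiCoeff_neg_T_sub_T_neg_add_two {n : ℤ} (hn : 0 < n) :
    HiCoeff (-T n - T (-n) + 2) n (-1) :=
  ⟨by simp; omega, by norm_num, fun k hk => by simp; omega⟩

lemma hiCoeff_sum_neg_one_pow_mul_T {s : Finset ℕ} {e : ℕ → ℤ} {i : ℕ} (hi : i ∈ s)
    (he : ∀ k ∈ s, k ≠ i → e k < e i) :
    HiCoeff (∑ k ∈ s, (-1 : LaurentPolynomial ℤ) ^ k * T (e k)) (e i) ((-1) ^ i) := by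
  refine ⟨?_, by positivity, fun j hj => ?_⟩ <;> simp only [coeffA_sum, coeffA_neg_one_pow_mul,
    coeffA_T, mul_ite, mul_one, mul_zero]
  · rw [Finset.sum_eq_single i (fun k hk hki => if_neg (he k hk hki).ne) (absurd hi), if_pos rfl]
  · refine Finset.sum_eq_zero fun k hk => if_neg ?_
    rcases eq_or_ne k i with rfl | hki
    · exact hj.ne
    · exact ((he k hk hki).trans hj).ne

lemma hiCoeff_P {n : ℕ} (hn : 1 ≤ n) : HiCoeff (P n) (3 * n + 2) ((-1) ^ n) := by
  have hsum := hiCoeff_sum_neg_one_pow_mul_T (e := fun k : ℕ => 4 * (k : ℤ) - n - 2)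
    (Finset.mem_Icc.2 ⟨hn, le_rfl⟩) fun k hk hkn => by simp at hk; omega
  rw [show (3 * n + 2 : ℤ) = 4 + (4 * n - n - 2) by ring, ← one_mul ((-1 : ℤ) ^ n)]
  exact ((hiCoeff_T_add_T_neg four_pos).mul hsum).add_left (hiCoeff_T _).2.2 (by omega)

lemma hiCoeff_Pbar {n : ℕ} (hn : 1 ≤ n) : HiCoeff (Pbar n) (n + 6) 1 := by
  have hsum := hiCoeff_sum_neg_one_pow_mul_T (e := fun k : ℕ => -4 * (k : ℤ) + n + 2)
    (Finset.mem_Icc.2 ⟨le_rfl, hn⟩) fun k hk hkn => by simp at hk; omega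
  exact (hiCoeff_T _).add_right ((hiCoeff_T_add_T_neg four_pos).mul hsum).2.2 (by omega)

lemma invert_P (n : ℕ) : invert (P n) = Pbar n := by
  simp [P, Pbar, map_sum, sub_eq_add_neg, add_comm]

lemma invert_Pbar (n : ℕ) : invert (Pbar n) = P n := by
  rw [← invert_P, involutive_invert]

lemma invert_neg_T_sub_T_neg (n : ℤ) :
    invert (-T n - T (-n) : LaurentPolynomial ℤ) = -T n - T (-n) := by
  simp [sub_eq_add_neg, add_comm]

lemma Q_one : Q 1 = -T (-3) := by
  simp [Q, Finset.sum_range_succ]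

lemma hiCoeff_N_one : HiCoeff (N 1) 9 1 := by
  rw [N, Q_one, pow_one]
  exact ((hiCoeff_neg_T_sub_T_neg (by norm_num)).mul (hiCoeff_neg_T 3)).add_right
    ((hiCoeff_neg_T_sub_T_neg_add_two (by norm_num)).mul (hiCoeff_neg_T (-3))).2.2 (by norm_num)

lemma hiCoeff_invert_N_one : HiCoeff (invert (N 1)) 7 1 := by
  simp only [N, Q_one, pow_one, map_add, map_mul, map_neg, map_ofNat, invert_T, neg_neg,
    invert_neg_T_sub_T_neg]
  exact ((hiCoeff_neg_T_sub_T_neg_add_two (by norm_num)).mul (hiCoeff_neg_T 3)).add_left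
    ((hiCoeff_neg_T_sub_T_neg (by norm_num)).mul (hiCoeff_neg_T (-3))).2.2 (by norm_num)

/-- for m ≥ 1, W(m) = (−A⁶−A⁻⁶)·N(1) + (−A⁴−A⁻⁴+2)·P(m+1)·P̄(m)
has h = 4m+15, ℓ = −4m−13, span 8m+28 > 16. -/
theorem stmt_5 (m : ℕ) (hm : 1 ≤ m)
    (W : LaurentPolynomial ℤ)
    (hW : W = (-T 6 - T (-6)) * N 1 + (-T 4 - T (-4) + 2) * (P (m+1) * Pbar m)) :
    IsHi W (4*(m:ℤ) + 15) ∧ IsLo W (-4*(m:ℤ) - 13) ∧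
    (4*(m:ℤ) + 15) - (-4*(m:ℤ) - 13) = 8*(m:ℤ) + 28 ∧
    8*(m:ℤ) + 28 > 16 := by
  have hG := hiCoeff_neg_T_sub_T_neg (n := 6) (by norm_num)
  have hF := hiCoeff_neg_T_sub_T_neg_add_two (n := 4) (by norm_num)
  have hInvW : invert W = (-T 6 - T (-6)) * invert (N 1)
      + (-T 4 - T (-4) + 2) * (Pbar (m + 1) * P m) := by
    simp only [hW, map_add, map_mul, invert_P, invert_Pbar, invert_neg_T_sub_T_neg, map_ofNat]
  have hHi := (hF.mul ((hiCoeff_P (by omega : 1 ≤ m + 1)).mul (hiCoeff_Pbar hm))).add_left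
    (hG.mul hiCoeff_N_one).2.2 (by push_cast; omega)
  have hLo := (hF.mul ((hiCoeff_Pbar (by omega : 1 ≤ m + 1)).mul (hiCoeff_P hm))).add_left
    (hG.mul hiCoeff_invert_N_one).2.2 (by push_cast; omega)
  refine ⟨?_, IsHi.isLo_of_invert ?_, by ring, by omega⟩
  · convert hW ▸ hHi.isHi using 1
    push_cast; ring
  · convert hInvW ▸ hLo.isHi using 1
    push_cast; ring
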